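/- Let 𝐀 be a finite relational structure. If SA¹ decides CSP(𝐀) (i.e., for every 𝐗, feasibility of SA¹(𝐗,𝐀) implies 𝐗 → 𝐀), then CSP(𝐀) is closed under ≡₁-equivalence: for all similar 𝐗₁, 𝐗₂ with the same iterated degree sequence, 𝐗₁ → 𝐀 if and only if 𝐗₂ → 𝐀. -/

import Mathlib

open Finset BigOperators

variable {σ : Type} [Fintype σ] [DecidableEq σ]

/-- Edge labels of the factor graph of a `σ`-structure: pairs `(S,R)` with
`S ⊆ [ar R]`. -/
abbrev FLab (ar : σ → ℕ) : Type := Σ R : σ, Finset (Fin (ar R))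

/-- The type of iterated degrees (colours) after `n` refinement rounds on the labelled
factor graph. The initial colour (a `Bool`) distinguishes elements from constraints. -/
def FColor (ar : σ → ℕ) : ℕ → Type
  | 0 => Bool
  | n + 1 => FColor ar n × Multiset (FLab ar × FColor ar n)

instance fColorDecEq (ar : σ → ℕ) : ∀ n, DecidableEq (FColor ar n)
  | 0 => inferInstanceAs (DecidableEq Bool)
  | n + 1 =>
      letI := fColorDecEq ar n
      inferInstanceAs (DecidableEq (FColor ar n × Multiset (FLab ar × FColor ar n)))

/-- The constraints of a structure: pairs of a symbol `R` and a tuple in `R`'s relation. -/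
abbrev Cstr (ar : σ → ℕ) {D : Type} (rel : ∀ R : σ, Finset (Fin (ar R) → D)) : Type :=
  Σ R : σ, {x : Fin (ar R) → D // x ∈ rel R}

/-- The label of the factor-graph edge between an element `a` and a constraint `c`. -/
def fLabOf (ar : σ → ℕ) {D : Type} [DecidableEq D] {rel : ∀ R : σ, Finset (Fin (ar R) → D)}
    (a : D) (c : Cstr ar rel) : FLab ar :=
  ⟨c.1, Finset.univ.filter (fun i => c.2.1 i = a)⟩

/-- The iterated degree `δ_n` of a vertex of the labelled factor graph of the structure
`rel` (a vertex is either an element, `Sum.inl`, or a constraint, `Sum.inr`):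
`δ_0` distinguishes elements from constraints and
`δ_{n+1}(v) = (δ_n(v), {{(ℓ_{v,w}, δ_n(w)) : w a factor-graph neighbour of v}})`. -/
def fdeg (ar : σ → ℕ) {D : Type} [Fintype D] [DecidableEq D]
    (rel : ∀ R : σ, Finset (Fin (ar R) → D)) :
    (n : ℕ) → (D ⊕ Cstr ar rel) → FColor ar n
  | 0, Sum.inl _ => false
  | 0, Sum.inr _ => true
  | n + 1, Sum.inl a =>
      (fdeg ar rel n (Sum.inl a),
        ((Finset.univ.filter (fun c : Cstr ar rel => ∃ i, c.2.1 i = a)).val.map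
          (fun c => (fLabOf ar a c, fdeg ar rel n (Sum.inr c)))))
  | n + 1, Sum.inr c =>
      (fdeg ar rel n (Sum.inr c),
        ((Finset.univ.filter (fun a : D => ∃ i, c.2.1 i = a)).val.map
          (fun a => (fLabOf ar a c, fdeg ar rel n (Sum.inl a)))))

/-- Two similar structures have the same iterated degree sequence if, for every `n`,
the multisets of iterated degrees of their factor-graph vertices coincide. -/
def SameIDS (ar : σ → ℕ) {D₁ D₂ : Type} [Fintype D₁] [DecidableEq D₁]
    [Fintype D₂] [DecidableEq D₂]
    (rel₁ : ∀ R : σ, Finset (Fin (ar R) → D₁))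
    (rel₂ : ∀ R : σ, Finset (Fin (ar R) → D₂)) : Prop :=
  ∀ n : ℕ,
    Multiset.map (fdeg ar rel₁ n) Finset.univ.val =
      Multiset.map (fdeg ar rel₂ n) Finset.univ.val

/-- A homomorphism between similar relational structures. -/
def IsHom (ar : σ → ℕ) {DX DA : Type}
    (relX : ∀ R : σ, Finset (Fin (ar R) → DX))
    (relA : ∀ R : σ, Finset (Fin (ar R) → DA))
    (h : DX → DA) : Prop :=
  ∀ (R : σ) (x : Fin (ar R) → DX), x ∈ relX R → (fun i => h (x i)) ∈ relA R
/-- A feasible solution of the system SA¹(𝐗,𝐀): variables `p x a` and, for each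
constraint `R(x)` of `𝐗` and each tuple `g` (maps `f : {x} → A` are encoded as tuples
`g` that respect the repetitions of `x`; `q R x g` is forced to `0` otherwise),
subject to (SA1) `Σ_a p x a = 1`, (SA3) marginal consistency, and (SA4) `q = 0`
outside `R^𝐀`. -/
def SA1Solution (ar : σ → ℕ) {DX DA : Type} [Fintype DA] [DecidableEq DA]
    (relX : ∀ R : σ, Finset (Fin (ar R) → DX))
    (relA : ∀ R : σ, Finset (Fin (ar R) → DA))
    (p : DX → DA → ℚ)
    (q : ∀ R : σ, (Fin (ar R) → DX) → (Fin (ar R) → DA) → ℚ) : Prop :=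
  (∀ x a, 0 ≤ p x a ∧ p x a ≤ 1) ∧
  (∀ (R : σ) (x : Fin (ar R) → DX) (g : Fin (ar R) → DA),
      x ∈ relX R → 0 ≤ q R x g ∧ q R x g ≤ 1) ∧
  (∀ x, ∑ a : DA, p x a = 1) ∧
  (∀ (R : σ) (x : Fin (ar R) → DX), x ∈ relX R → ∀ (i : Fin (ar R)) (a : DA),
      p (x i) a =
        ∑ g ∈ Finset.univ.filter (fun g : Fin (ar R) → DA => g i = a), q R x g) ∧
  (∀ (R : σ) (x : Fin (ar R) → DX) (g : Fin (ar R) → DA),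
      x ∈ relX R → g ∉ relA R → q R x g = 0) ∧
  (∀ (R : σ) (x : Fin (ar R) → DX) (g : Fin (ar R) → DA),
      x ∈ relX R → (∃ i j, x i = x j ∧ g i ≠ g j) → q R x g = 0)

/-- Feasibility of the system SA¹(𝐗,𝐀). -/
def SA1Feasible (ar : σ → ℕ) {DX DA : Type} [Fintype DA] [DecidableEq DA]
    (relX : ∀ R : σ, Finset (Fin (ar R) → DX))
    (relA : ∀ R : σ, Finset (Fin (ar R) → DA)) : Prop :=
  ∃ p q, SA1Solution ar relX relA p q

/-!
Fix a homomorphism `h : 𝐗₁ → 𝐀` and run colour refinement on the disjoint union of the factor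
graphs of `𝐗₁` and `𝐗₂` until the partition stabilises at some round `N`. Give each element `x`
of `𝐗₂` the distribution of `h y` for `y` uniform in its colour class in `𝐗₁` (nonempty since
`𝐗₁ ≡₁ 𝐗₂`), and each constraint of `𝐗₂` the distribution of `h ∘ x'` for `x'` uniform among
the constraints of `𝐗₁` of its colour. By stability, `x' ↦ x' i` maps a constraint class onto
the element class of `x i` with fibres of constant size, which is exactly marginal consistency.
This is the composition of the `≡₁`-solution of SA¹(𝐗₂,𝐗₁) with the integral solution `h`.
Hence SA¹(𝐗₂,𝐀) is feasible, and since SA¹ decides CSP(𝐀), `𝐗₂ → 𝐀`.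
-/

theorem Finset.expect_comp_eq_of_card_fiber_eq {ι κ K : Type*} [DecidableEq κ] [Semifield K]
    [CharZero K] {s : Finset ι} {t : Finset κ} {f : ι → κ} {d : ℕ} (hd : d ≠ 0)
    (hf : ∀ x ∈ s, f x ∈ t) (hfib : ∀ y ∈ t, #{x ∈ s | f x = y} = d) (φ : κ → K) :
    𝔼 x ∈ s, φ (f x) = 𝔼 y ∈ t, φ y := by
  have hsum : ∑ x ∈ s, φ (f x) = d * ∑ y ∈ t, φ y := by
    rw [← Finset.sum_fiberwise_of_maps_to hf, Finset.mul_sum]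
    refine Finset.sum_congr rfl fun y hy => ?_
    rw [Finset.sum_congr rfl fun x hx => by rw [(Finset.mem_filter.mp hx).2], Finset.sum_const,
      hfib y hy, nsmul_eq_mul]
  have hcard : #s = #t * d := by
    rw [Finset.card_eq_sum_card_fiberwise hf, Finset.sum_congr rfl hfib, Finset.sum_const,
      smul_eq_mul]
  rw [Finset.expect_eq_sum_div_card, Finset.expect_eq_sum_div_card, hsum, hcard, Nat.cast_mul,
    mul_comm (#t : K), mul_div_mul_left _ _ (Nat.cast_ne_zero.mpr hd)]

theorem Finset.expect_ite_mem_Icc {ι K : Type*} [Semifield K] [LinearOrder K]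
    [IsStrictOrderedRing K] (s : Finset ι) (p : ι → Prop) [DecidablePred p] :
    𝔼 x ∈ s, (if p x then 1 else 0 : K) ∈ Set.Icc 0 1 := by
  refine ⟨Finset.expect_nonneg fun x _ => by split_ifs <;> norm_num, ?_⟩
  rcases s.eq_empty_or_nonempty with rfl | hs
  · simp
  · exact Finset.expect_le hs fun x _ => by split_ifs <;> norm_num

theorem exists_stable_of_refines {V : Type*} [Finite V] {C : ℕ → Type*} (F : ∀ n, V → C n)
    (π : ∀ n, C (n + 1) → C n) (hπ : ∀ n v, π n (F (n + 1) v) = F n v) :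
    ∃ N, ∀ u v, F N u = F N v → F (N + 1) u = F (N + 1) v := by
  have hrange : ∀ n, Set.range (F n) = π n '' Set.range (F (n + 1)) := fun n => by
    rw [← Set.range_comp]; exact congrArg Set.range (funext fun v => (hπ n v).symm)
  set k : ℕ → ℕ := fun n => (Set.range (F n)).ncard
  have hk_mono : ∀ n, k n ≤ k (n + 1) := fun n => by
    simp only [k, hrange n]; exact Set.ncard_image_le (Set.finite_range _)
  have hk_le : ∀ n, k n ≤ Nat.card V := fun n => by
    simp only [k, ← Set.image_univ, ← Set.ncard_univ V]; exact Set.ncard_image_le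
  obtain ⟨N, hN⟩ : ∃ N, k (N + 1) = k N := by
    by_contra! hne
    have hk : StrictMono k := strictMono_nat_of_lt_succ fun n => (hk_mono n).lt_of_ne (hne n).symm
    exact (hk.le_apply (x := Nat.card V + 1)).not_gt (Nat.lt_succ_of_le (hk_le _))
  have hinj : Set.InjOn (π N) (Set.range (F (N + 1))) :=
    Set.injOn_of_ncard_image_eq (by rw [← hrange]; exact hN.symm) (Set.finite_range _)
  exact ⟨N, fun u v huv => hinj ⟨u, rfl⟩ ⟨v, rfl⟩ (by rw [hπ, hπ, huv])⟩

section

omit [DecidableEq σ]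

def FColor.base (ar : σ → ℕ) : ∀ n, FColor ar n → Bool
  | 0 => id
  | n + 1 => fun c => FColor.base ar n c.1

theorem fdeg_succ_fst (ar : σ → ℕ) {D : Type} [Fintype D] [DecidableEq D]
    (rel : ∀ R : σ, Finset (Fin (ar R) → D)) (n : ℕ) (v : D ⊕ Cstr ar rel) :
    (fdeg ar rel (n + 1) v).1 = fdeg ar rel n v := by
  cases v <;> rfl

theorem FColor.base_fdeg (ar : σ → ℕ) {D : Type} [Fintype D] [DecidableEq D]
    (rel : ∀ R : σ, Finset (Fin (ar R) → D)) (n : ℕ) (v : D ⊕ Cstr ar rel) :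
    FColor.base ar n (fdeg ar rel n v) = v.isRight := by
  induction n with
  | zero => cases v <;> rfl
  | succ n ih => exact (congrArg (FColor.base ar n) (fdeg_succ_fst ar rel n v)).trans ih

variable (ar : σ → ℕ) {D₁ D₂ : Type} [Fintype D₁] [DecidableEq D₁] [Fintype D₂] [DecidableEq D₂]
  (rel₁ : ∀ R : σ, Finset (Fin (ar R) → D₁)) (rel₂ : ∀ R : σ, Finset (Fin (ar R) → D₂))

def IsFdegStable (N : ℕ) : Prop :=
  ∀ u v, Sum.elim (fdeg ar rel₁ N) (fdeg ar rel₂ N) u =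
      Sum.elim (fdeg ar rel₁ N) (fdeg ar rel₂ N) v →
    Sum.elim (fdeg ar rel₁ (N + 1)) (fdeg ar rel₂ (N + 1)) u =
      Sum.elim (fdeg ar rel₁ (N + 1)) (fdeg ar rel₂ (N + 1)) v

theorem exists_isFdegStable : ∃ N, IsFdegStable ar rel₁ rel₂ N :=
  exists_stable_of_refines (fun n => Sum.elim (fdeg ar rel₁ n) (fdeg ar rel₂ n))
    (fun _ => Prod.fst) fun n v => by cases v <;> exact fdeg_succ_fst ..

variable {ar rel₁ rel₂}

theorem SameIDS.symm (h : SameIDS ar rel₁ rel₂) : SameIDS ar rel₂ rel₁ :=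
  fun n => (h n).symm

theorem SameIDS.exists_fdeg_inl_eq (h : SameIDS ar rel₁ rel₂) (n : ℕ) (x : D₂) :
    ∃ y : D₁, fdeg ar rel₁ n (.inl y) = fdeg ar rel₂ n (.inl x) := by
  obtain ⟨v, -, hv⟩ := Multiset.mem_map.mp
    ((h n).symm ▸ Multiset.mem_map_of_mem (fdeg ar rel₂ n) (Finset.mem_univ_val (Sum.inl x)))
  cases v with
  | inl y => exact ⟨y, hv⟩
  | inr c => simpa [FColor.base_fdeg] using congrArg (FColor.base ar n) hv

theorem fdeg_inl_eq_of_fdeg_succ_inr_eq {R : σ} {x₁ : Fin (ar R) → D₁} (hx₁ : x₁ ∈ rel₁ R)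
    {x₂ : Fin (ar R) → D₂} (hx₂ : x₂ ∈ rel₂ R) {n : ℕ}
    (h : fdeg ar rel₁ (n + 1) (.inr ⟨R, x₁, hx₁⟩) = fdeg ar rel₂ (n + 1) (.inr ⟨R, x₂, hx₂⟩))
    (i : Fin (ar R)) :
    ({j | x₁ j = x₁ i} : Finset (Fin (ar R))) = ({j | x₂ j = x₂ i} : Finset (Fin (ar R))) ∧
      fdeg ar rel₁ n (.inl (x₁ i)) = fdeg ar rel₂ n (.inl (x₂ i)) := by
  have hmem : (fLabOf ar (x₂ i) (⟨R, x₂, hx₂⟩ : Cstr ar rel₂), fdeg ar rel₂ n (.inl (x₂ i))) ∈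
      (fdeg ar rel₂ (n + 1) (.inr ⟨R, x₂, hx₂⟩)).2 :=
    Multiset.mem_map_of_mem _ (Finset.mem_filter.mpr ⟨Finset.mem_univ _, i, rfl⟩)
  rw [← h] at hmem
  obtain ⟨a, -, ha⟩ := Multiset.mem_map.mp hmem
  simp only [fLabOf, Prod.mk.injEq, Sigma.mk.injEq, heq_eq_eq, true_and] at ha
  obtain rfl : x₁ i = a := by
    have hi : i ∈ ({j | x₁ j = a} : Finset (Fin (ar R))) := by rw [ha.1]; simp
    simpa using hi
  exact ha

end

theorem count_fdeg_succ_inl (ar : σ → ℕ) {D : Type} [Fintype D] [DecidableEq D]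
    (rel : ∀ R : σ, Finset (Fin (ar R) → D)) (n : ℕ) (y : D) {R : σ} {S : Finset (Fin (ar R))}
    {i : Fin (ar R)} (hi : i ∈ S) (δ : FColor ar n) :
    (fdeg ar rel (n + 1) (.inl y)).2.count (⟨R, S⟩, δ) =
      #{x : {x // x ∈ rel R} | ({j | x.1 j = y} : Finset (Fin (ar R))) = S ∧
        fdeg ar rel n (.inr ⟨R, x⟩) = δ} := by
  change Multiset.count _ (Multiset.map _ _) = _
  rw [Multiset.count_map, ← Finset.filter_val, Finset.card_val]
  symm
  refine Finset.card_bij (fun x _ => (⟨R, x⟩ : Cstr ar rel)) ?_ ?_ ?_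
  · intro x hx
    obtain ⟨hS, hδ⟩ := (Finset.mem_filter.mp hx).2
    have hiy : i ∈ ({j | x.1 j = y} : Finset (Fin (ar R))) := hS ▸ hi
    subst hS hδ
    rw [Finset.mem_filter, Finset.mem_filter]
    exact ⟨⟨Finset.mem_univ _, i, by simpa using hiy⟩, rfl⟩
  · simp
  · rintro ⟨R', x⟩ hc
    rw [Finset.mem_filter, Prod.mk.injEq] at hc
    obtain ⟨-, hlab, hδ⟩ := hc
    obtain ⟨rfl, hS⟩ := Sigma.mk.inj_iff.mp hlab
    exact ⟨x, by simp [← eq_of_heq hS, hδ], rfl⟩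

section ColourClasses

variable (ar : σ → ℕ) {D₁ D₂ : Type} [Fintype D₁] [DecidableEq D₁] [Fintype D₂] [DecidableEq D₂]
  (rel₁ : ∀ R : σ, Finset (Fin (ar R) → D₁)) (rel₂ : ∀ R : σ, Finset (Fin (ar R) → D₂)) (N : ℕ)
  {DA : Type} [Fintype DA] [DecidableEq DA] (h : D₁ → DA)

def elemClass (x : D₂) : Finset D₁ :=
  {y | fdeg ar rel₁ N (.inl y) = fdeg ar rel₂ N (.inl x)}

def cstrClass {R : σ} (x : {x // x ∈ rel₂ R}) : Finset {x // x ∈ rel₁ R} :=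
  {x' | fdeg ar rel₁ N (.inr ⟨R, x'⟩) = fdeg ar rel₂ N (.inr ⟨R, x⟩)}

def colourClassP (x : D₂) (a : DA) : ℚ :=
  𝔼 y ∈ elemClass ar rel₁ rel₂ N x, if h y = a then 1 else 0

def colourClassQ (R : σ) (x : Fin (ar R) → D₂) (g : Fin (ar R) → DA) : ℚ :=
  if hx : x ∈ rel₂ R then
    𝔼 x' ∈ cstrClass ar rel₁ rel₂ N ⟨x, hx⟩, if (fun i => h (x'.1 i)) = g then 1 else 0
  else 0

variable {ar rel₁ rel₂ N}

theorem blocks_eq_and_mem_elemClass_of_mem_cstrClass (hN : IsFdegStable ar rel₁ rel₂ N)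
    {R : σ} {x : {x // x ∈ rel₂ R}} {x' : {x // x ∈ rel₁ R}}
    (hx' : x' ∈ cstrClass ar rel₁ rel₂ N x) (i : Fin (ar R)) :
    ({j | x'.1 j = x'.1 i} : Finset (Fin (ar R))) = ({j | x.1 j = x.1 i} : Finset (Fin (ar R))) ∧
      x'.1 i ∈ elemClass ar rel₁ rel₂ N (x.1 i) := by
  obtain ⟨hblock, hcol⟩ := fdeg_inl_eq_of_fdeg_succ_inr_eq x'.2 x.2
    (hN (.inl (.inr _)) (.inr (.inr _)) (Finset.mem_filter.mp hx').2) i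
  exact ⟨hblock, Finset.mem_filter.mpr ⟨Finset.mem_univ _, hcol⟩⟩

theorem card_cstrClass_fiber (hN : IsFdegStable ar rel₁ rel₂ N) {R : σ} (x : {x // x ∈ rel₂ R})
    (i : Fin (ar R)) {y : D₁} (hy : y ∈ elemClass ar rel₁ rel₂ N (x.1 i)) :
    #{x' ∈ cstrClass ar rel₁ rel₂ N x | x'.1 i = y} =
      (fdeg ar rel₂ (N + 1) (.inl (x.1 i))).2.count
        (⟨R, ({j | x.1 j = x.1 i} : Finset _)⟩, fdeg ar rel₂ N (.inr ⟨R, x⟩)) := by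
  have hi : i ∈ ({j | x.1 j = x.1 i} : Finset (Fin (ar R))) := by simp
  have hstab : fdeg ar rel₁ (N + 1) (.inl y) = fdeg ar rel₂ (N + 1) (.inl (x.1 i)) :=
    hN (.inl (.inl y)) (.inr (.inl (x.1 i))) (Finset.mem_filter.mp hy).2
  rw [← hstab, count_fdeg_succ_inl ar rel₁ N y hi, cstrClass, Finset.filter_filter]
  refine congrArg Finset.card (Finset.filter_congr fun x' _ => ⟨?_, ?_⟩)
  · rintro ⟨hcol, rfl⟩
    exact ⟨(blocks_eq_and_mem_elemClass_of_mem_cstrClass hN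
      (Finset.mem_filter.mpr ⟨Finset.mem_univ _, hcol⟩) i).1, hcol⟩
  · rintro ⟨hS, hcol⟩
    have hi' : i ∈ ({j | x'.1 j = y} : Finset (Fin (ar R))) := hS ▸ hi
    exact ⟨hcol, by simpa using hi'⟩

theorem colourClassP_eq_sum_colourClassQ (hN : IsFdegStable ar rel₁ rel₂ N) {R : σ}
    {x : Fin (ar R) → D₂} (hx : x ∈ rel₂ R) (i : Fin (ar R)) (a : DA) :
    colourClassP ar rel₁ rel₂ N h (x i) a =
      ∑ g ∈ Finset.univ.filter (fun g : Fin (ar R) → DA => g i = a),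
        colourClassQ ar rel₁ rel₂ N h R x g := by
  have hi : i ∈ ({j | x j = x i} : Finset (Fin (ar R))) := by simp
  have hd : (fdeg ar rel₂ (N + 1) (.inl (x i))).2.count
      (⟨R, ({j | x j = x i} : Finset _)⟩, fdeg ar rel₂ N (.inr ⟨R, x, hx⟩)) ≠ 0 := by
    rw [count_fdeg_succ_inl ar rel₂ N (x i) hi]
    exact Finset.card_ne_zero.mpr ⟨⟨x, hx⟩, by simp⟩
  simp only [colourClassQ, dif_pos hx, ← Finset.expect_sum_comm]
  rw [colourClassP, ← Finset.expect_comp_eq_of_card_fiber_eq hd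
    (fun x' hx' => (blocks_eq_and_mem_elemClass_of_mem_cstrClass hN hx' i).2)
    (fun y hy => card_cstrClass_fiber hN ⟨x, hx⟩ i hy)]
  exact Finset.expect_congr rfl fun x' _ => by simp [Finset.sum_ite_eq]

theorem sa1Solution_colourClass (hN : IsFdegStable ar rel₁ rel₂ N)
    (hcover : ∀ x : D₂, ∃ y : D₁, fdeg ar rel₁ N (.inl y) = fdeg ar rel₂ N (.inl x))
    {relA : ∀ R : σ, Finset (Fin (ar R) → DA)} (hh : IsHom ar rel₁ relA h) :
    SA1Solution ar rel₂ relA (colourClassP ar rel₁ rel₂ N h) (colourClassQ ar rel₁ rel₂ N h) := by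
  refine ⟨fun x a => Finset.expect_ite_mem_Icc _ _, fun R x g hx => ?_, fun x => ?_,
    fun R x hx => colourClassP_eq_sum_colourClassQ h hN hx, fun R x g hx hg => ?_,
    fun R x g hx hker => ?_⟩
  · rw [colourClassQ, dif_pos hx]
    exact Finset.expect_ite_mem_Icc _ _
  · obtain ⟨y, hy⟩ := hcover x
    simp only [colourClassP, ← Finset.expect_sum_comm, Finset.sum_ite_eq, Finset.mem_univ,
      if_true]
    exact Finset.expect_const ⟨y, Finset.mem_filter.mpr ⟨Finset.mem_univ _, hy⟩⟩ 1
  · rw [colourClassQ, dif_pos hx]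
    exact Finset.expect_eq_zero fun x' _ =>
      if_neg fun (hg' : (fun i => h (x'.1 i)) = g) => hg (hg' ▸ hh R x'.1 x'.2)
  · obtain ⟨i, j, hij, hg⟩ := hker
    rw [colourClassQ, dif_pos hx]
    refine Finset.expect_eq_zero fun x' hx' => if_neg fun hg' => hg ?_
    have hj : j ∈ ({k | x'.1 k = x'.1 i} : Finset (Fin (ar R))) := by
      rw [(blocks_eq_and_mem_elemClass_of_mem_cstrClass hN hx' i).1]; simp [hij]
    rw [← hg']
    exact congrArg h (Finset.mem_filter.mp hj).2.symm

end ColourClasses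

theorem SA1Feasible.of_sameIDS_of_isHom {ar : σ → ℕ} {D₁ D₂ DA : Type} [Fintype D₁]
    [DecidableEq D₁] [Fintype D₂] [DecidableEq D₂] [Fintype DA] [DecidableEq DA]
    {rel₁ : ∀ R : σ, Finset (Fin (ar R) → D₁)} {rel₂ : ∀ R : σ, Finset (Fin (ar R) → D₂)}
    {relA : ∀ R : σ, Finset (Fin (ar R) → DA)} (hids : SameIDS ar rel₁ rel₂) {h : D₁ → DA}
    (hh : IsHom ar rel₁ relA h) : SA1Feasible ar rel₂ relA :=
  let ⟨N, hN⟩ := exists_isFdegStable ar rel₁ rel₂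
  ⟨_, _, sa1Solution_colourClass h hN (hids.exists_fdeg_inl_eq N) hh⟩

/-- If SA¹ decides CSP(𝐀) — i.e. feasibility of SA¹(𝐗,𝐀) implies that 𝐗 is
homomorphic to 𝐀 for every input 𝐗 — then CSP(𝐀) is closed under ≡₁-equivalence:
any two similar inputs with the same iterated degree sequence are either both
homomorphic to 𝐀 or both not. -/
theorem stmt14 (ar : σ → ℕ) {DA : Type} [Fintype DA] [DecidableEq DA]
    (relA : ∀ R : σ, Finset (Fin (ar R) → DA))
    (hdec : ∀ (DX : Type) [Fintype DX] [DecidableEq DX]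
      (relX : ∀ R : σ, Finset (Fin (ar R) → DX)),
      SA1Feasible ar relX relA → ∃ h : DX → DA, IsHom ar relX relA h) :
    ∀ (D₁ D₂ : Type) [Fintype D₁] [DecidableEq D₁] [Fintype D₂] [DecidableEq D₂]
      (rel₁ : ∀ R : σ, Finset (Fin (ar R) → D₁))
      (rel₂ : ∀ R : σ, Finset (Fin (ar R) → D₂)),
      SameIDS ar rel₁ rel₂ →
        ((∃ h : D₁ → DA, IsHom ar rel₁ relA h) ↔
          (∃ h : D₂ → DA, IsHom ar rel₂ relA h)) := by
  intro D₁ D₂ _ _ _ _ rel₁ rel₂ hids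
  exact ⟨fun ⟨_, hh⟩ => hdec D₂ rel₂ (.of_sameIDS_of_isHom hids hh),
    fun ⟨_, hh⟩ => hdec D₁ rel₁ (.of_sameIDS_of_isHom hids.symm hh)⟩
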